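/- Let s, i, d, a, r, e be a solution of the SIDARE model on [0,∞) with nonnegative parameters, nonnegative initial values at t = 0, and s(0) + i(0) + d(0) + a(0) + r(0) + e(0) = 1. Then each of s(t), i(t), d(t), a(t), r(t), e(t) lies in the interval [0,1] for all t ≥ 0. -/

import Mathlib

open Set

/-- A function with zero right-derivative on `[0,∞)` is constant there. -/
private lemma sidare_constOn {f : ℝ → ℝ}
    (hf : ∀ t ∈ Ici (0:ℝ), HasDerivWithinAt f 0 (Ici (0:ℝ)) t) :
    ∀ t ∈ Ici (0:ℝ), f t = f 0 := by
  intro t ht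
  have h := Convex.norm_image_sub_le_of_norm_hasDerivWithin_le
    (f' := fun _ => (0:ℝ)) (C := 0) (fun x hx => hf x hx)
    (fun x _ => by simp) (convex_Ici 0) (self_mem_Ici) ht
  simp only [zero_mul, norm_le_zero_iff, sub_eq_zero] at h
  exact h

/-- A function with nonneg right-derivative on `[0,∞)` stays ≥ its initial value. -/
private lemma sidare_nonnegOn {f g : ℝ → ℝ}
    (hf : ∀ t ∈ Ici (0:ℝ), HasDerivWithinAt f (g t) (Ici (0:ℝ)) t)
    (hg : ∀ t ∈ Ici (0:ℝ), 0 ≤ g t) (h0 : 0 ≤ f 0) :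
    ∀ t ∈ Ici (0:ℝ), 0 ≤ f t := by
  have hmono : MonotoneOn f (Ici 0) :=
    monotoneOn_of_hasDerivWithinAt_nonneg (convex_Ici 0)
      (fun x hx => (hf x hx).continuousWithinAt)
      (fun x hx => ((hf x (interior_subset hx)).mono interior_subset))
      (fun x hx => hg x (interior_subset hx))
  exact fun t ht => h0.trans (hmono self_mem_Ici ht ht)

private lemma sidare_nonneg_affine {x g : ℝ → ℝ} (k : ℝ)
    (hx : ∀ t ∈ Ici (0:ℝ), HasDerivWithinAt x (g t - k * x t) (Ici (0:ℝ)) t)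
    (hg : ∀ t ∈ Ici (0:ℝ), 0 ≤ g t) (h0 : 0 ≤ x 0) :
    ∀ t ∈ Ici (0:ℝ), 0 ≤ x t := by
  have hF : ∀ t ∈ Ici (0:ℝ), HasDerivWithinAt (fun t => x t * Real.exp (k * t))
      (g t * Real.exp (k * t)) (Ici (0:ℝ)) t := by
    intro t ht
    have hek : HasDerivAt (fun t : ℝ => Real.exp (k * t)) (Real.exp (k * t) * (k * 1)) t :=
      (((hasDerivAt_id t).const_mul k).exp)
    have h := (hx t ht).fun_mul hek.hasDerivWithinAt
    refine h.congr_deriv ?_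
    ring
  have key := sidare_nonnegOn hF
    (fun t ht => mul_nonneg (hg t ht) (Real.exp_pos _).le) (by simpa using h0)
  intro t ht
  nlinarith [key t ht, Real.exp_pos (k * t)]

private lemma sidare_nonneg_linear {x c : ℝ → ℝ}
    (hc : ContinuousOn c (Ici (0:ℝ)))
    (hx : ∀ t ∈ Ici (0:ℝ), HasDerivWithinAt x (c t * x t) (Ici (0:ℝ)) t)
    (h0 : 0 ≤ x 0) : ∀ t ∈ Ici (0:ℝ), 0 ≤ x t := by
  set cext : ℝ → ℝ := fun t => c (max t 0) with hcext
  have hcextcont : Continuous cext :=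
    hc.comp_continuous (continuous_id.max continuous_const) (fun t => mem_Ici.mpr (le_max_right _ _))
  set C : ℝ → ℝ := fun t => ∫ u in (0:ℝ)..t, cext u with hCdef
  have hC : ∀ t, HasDerivAt C (cext t) t := fun t =>
    intervalIntegral.integral_hasDerivAt_right (hcextcont.intervalIntegrable _ _)
      (hcextcont.stronglyMeasurableAtFilter _ _) hcextcont.continuousAt
  have hF : ∀ t ∈ Ici (0:ℝ), HasDerivWithinAt (fun t => x t * Real.exp (-C t)) 0
      (Ici (0:ℝ)) t := by
    intro t ht
    have hexp : HasDerivAt (fun t : ℝ => Real.exp (-C t)) (Real.exp (-C t) * (-cext t)) t :=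
      ((hC t).neg).exp
    have h := (hx t ht).fun_mul hexp.hasDerivWithinAt
    have hct : cext t = c t := by simp [hcext, max_eq_left (mem_Ici.mp ht)]
    refine h.congr_deriv ?_
    rw [hct]; ring
  have hconst := sidare_constOn hF
  intro t ht
  have h := hconst t ht
  nlinarith [Real.exp_pos (-C t), mul_nonneg h0 (Real.exp_pos (-C 0)).le]

/-- **All SIDARE states remain in `[0,1]`.**
For a solution of the SIDARE model on `[0,∞)` with nonnegative parameters,
nonnegative initial values summing to `1`, each state lies in `[0,1]`
for all `t ≥ 0`. -/
theorem sidare_states_mem_unitInterval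
    (β γi γd γa ν ξi ξd μ : ℝ)
    (hβ : 0 ≤ β) (hγi : 0 ≤ γi) (hγd : 0 ≤ γd) (hγa : 0 ≤ γa)
    (hν : 0 ≤ ν) (hξi : 0 ≤ ξi) (hξd : 0 ≤ ξd) (hμ : 0 ≤ μ)
    (s i d a r e : ℝ → ℝ)
    (hs : ∀ t ∈ Set.Ici (0:ℝ),
      HasDerivWithinAt s (-β * s t * i t) (Set.Ici (0:ℝ)) t)
    (hi : ∀ t ∈ Set.Ici (0:ℝ),
      HasDerivWithinAt i (β * s t * i t - (γi + ξi + ν) * i t) (Set.Ici (0:ℝ)) t)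
    (hd : ∀ t ∈ Set.Ici (0:ℝ),
      HasDerivWithinAt d (ν * i t - (γd + ξd) * d t) (Set.Ici (0:ℝ)) t)
    (ha : ∀ t ∈ Set.Ici (0:ℝ),
      HasDerivWithinAt a (ξi * i t + ξd * d t - (γa + μ) * a t) (Set.Ici (0:ℝ)) t)
    (hr : ∀ t ∈ Set.Ici (0:ℝ),
      HasDerivWithinAt r (γi * i t + γd * d t + γa * a t) (Set.Ici (0:ℝ)) t)
    (he : ∀ t ∈ Set.Ici (0:ℝ),
      HasDerivWithinAt e (μ * a t) (Set.Ici (0:ℝ)) t)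
    (hs0 : 0 ≤ s 0) (hi0 : 0 ≤ i 0) (hd0 : 0 ≤ d 0)
    (ha0 : 0 ≤ a 0) (hr0 : 0 ≤ r 0) (he0 : 0 ≤ e 0)
    (hsum0 : s 0 + i 0 + d 0 + a 0 + r 0 + e 0 = 1) :
    ∀ t ∈ Set.Ici (0:ℝ),
      s t ∈ Set.Icc (0:ℝ) 1 ∧ i t ∈ Set.Icc (0:ℝ) 1 ∧ d t ∈ Set.Icc (0:ℝ) 1 ∧
      a t ∈ Set.Icc (0:ℝ) 1 ∧ r t ∈ Set.Icc (0:ℝ) 1 ∧ e t ∈ Set.Icc (0:ℝ) 1 := by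
  -- continuity of i and s on [0,∞)
  have hscont : ContinuousOn s (Ici 0) := fun t ht => (hs t ht).continuousWithinAt
  have hicont : ContinuousOn i (Ici 0) := fun t ht => (hi t ht).continuousWithinAt
  -- s ≥ 0
  have hsnn : ∀ t ∈ Ici (0:ℝ), 0 ≤ s t := by
    refine sidare_nonneg_linear (c := fun t => -β * i t)
      (continuousOn_const.mul hicont) (fun t ht => ?_) hs0
    have h := hs t ht
    convert h using 1; ring
  -- i ≥ 0
  have hinn : ∀ t ∈ Ici (0:ℝ), 0 ≤ i t := by
    refine sidare_nonneg_linear (c := fun t => β * s t - (γi + ξi + ν))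
      ((continuousOn_const.mul hscont).sub continuousOn_const) (fun t ht => ?_) hi0
    have h := hi t ht
    convert h using 1; ring
  -- d ≥ 0
  have hdnn : ∀ t ∈ Ici (0:ℝ), 0 ≤ d t :=
    sidare_nonneg_affine (g := fun t => ν * i t) (γd + ξd) hd
      (fun t ht => mul_nonneg hν (hinn t ht)) hd0
  -- a ≥ 0
  have hann : ∀ t ∈ Ici (0:ℝ), 0 ≤ a t :=
    sidare_nonneg_affine (g := fun t => ξi * i t + ξd * d t) (γa + μ) ha
      (fun t ht => add_nonneg (mul_nonneg hξi (hinn t ht)) (mul_nonneg hξd (hdnn t ht))) ha0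
  -- r ≥ 0
  have hrnn : ∀ t ∈ Ici (0:ℝ), 0 ≤ r t :=
    sidare_nonnegOn hr
      (fun t ht => add_nonneg (add_nonneg (mul_nonneg hγi (hinn t ht))
        (mul_nonneg hγd (hdnn t ht))) (mul_nonneg hγa (hann t ht))) hr0
  -- e ≥ 0
  have henn : ∀ t ∈ Ici (0:ℝ), 0 ≤ e t :=
    sidare_nonnegOn he (fun t ht => mul_nonneg hμ (hann t ht)) he0
  -- the sum is constant
  have hsum : ∀ t ∈ Ici (0:ℝ), s t + i t + d t + a t + r t + e t = 1 := by
    have hS : ∀ t ∈ Ici (0:ℝ), HasDerivWithinAt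
        (fun t => s t + i t + d t + a t + r t + e t) 0 (Ici (0:ℝ)) t := by
      intro t ht
      have h := ((((((hs t ht).fun_add (hi t ht)).fun_add (hd t ht)).fun_add (ha t ht)).fun_add
        (hr t ht)).fun_add (he t ht))
      refine h.congr_deriv ?_; ring
    intro t ht
    rw [sidare_constOn hS t ht, hsum0]
  intro t ht
  have h1 := hsnn t ht; have h2 := hinn t ht; have h3 := hdnn t ht
  have h4 := hann t ht; have h5 := hrnn t ht; have h6 := henn t ht
  have h7 := hsum t ht
  refine ⟨⟨h1, by linarith⟩, ⟨h2, by linarith⟩, ⟨h3, by linarith⟩,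
    ⟨h4, by linarith⟩, ⟨h5, by linarith⟩, ⟨h6, by linarith⟩⟩
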